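/- The function ξ : Ω^M → Bool defined by ξ(ω, c) = ω.1 (Xavier's colour) is not 𝒜^M-measurable: its preimage ξ⁻¹({true}) = {(ω, c) | ω.1 = true}, whose Ω-slice at the context YZ is the set E_X(R_X) = {true} × Bool × Bool, does not belong to 𝒜^M, because E_X(R_X) is not 𝒜_YZ-measurable. -/

import Mathlib

open MeasureTheory

/-- The sample space: colours (`true` = Red, `false` = Blue) chosen by X, Y, Z. -/
abbrev SampleSpace : Type := Bool × Bool × Bool

/-- The three possible contexts: which pair of siblings attends the game. -/
inductive Ctx : Type
  | XY | XZ | YZ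
deriving DecidableEq

instance instFintypeCtx : Fintype Ctx :=
  ⟨{Ctx.XY, Ctx.XZ, Ctx.YZ}, fun c => by cases c <;> simp⟩

/-- The contextual σ-algebras `𝒜_c`: comaps under the respective projections of the
discrete σ-algebras on `Bool × Bool`. -/
def alg : Ctx → MeasurableSpace SampleSpace
  | Ctx.XY => MeasurableSpace.comap (fun ω : SampleSpace => (ω.1, ω.2.1)) ⊤
  | Ctx.XZ => MeasurableSpace.comap (fun ω : SampleSpace => (ω.1, ω.2.2)) ⊤
  | Ctx.YZ => MeasurableSpace.comap (fun ω : SampleSpace => (ω.2.1, ω.2.2)) ⊤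

/-- The augmented σ-algebra `𝒜^M` on the sample metaspace `Ω^M = Ω × C`:
a set `S` is measurable iff, for every context `c`, the slice `{ω | (ω, c) ∈ S}`
is `𝒜_c`-measurable. -/
def algM : MeasurableSpace (SampleSpace × Ctx) where
  MeasurableSet' S := ∀ c, MeasurableSet[alg c] {ω | (ω, c) ∈ S}
  measurableSet_empty := fun c => @MeasurableSet.empty _ (alg c)
  measurableSet_compl := fun S hS c => (hS c).compl
  measurableSet_iUnion := fun f hf c => by
    have h : {ω | (ω, c) ∈ ⋃ i, f i} = ⋃ i, {ω | (ω, c) ∈ f i} := by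
      ext ω; simp
    rw [h]
    exact MeasurableSet.iUnion fun i => hf i c

/-- `ξ : Ω^M → Bool`, Xavier's colour. -/
def xi : SampleSpace × Ctx → Bool := fun p => p.1.1

/-- The event `E_X(R_X) = {true} × Bool × Bool ⊆ Ω` (Xavier chose Red). -/
def eventXRed : Set SampleSpace := {true} ×ˢ (Set.univ : Set (Bool × Bool))

lemma eventXRed_not_meas : ¬ MeasurableSet[alg Ctx.YZ] eventXRed := by
  rintro ⟨t, -, ht⟩
  have h1 : ((true, true, true) : SampleSpace) ∈ eventXRed := by
    simp [eventXRed]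
  have h2 : ((false, true, true) : SampleSpace) ∉ eventXRed := by
    simp [eventXRed]
  rw [← ht] at h1 h2
  exact h2 h1

/-- The function `ξ(ω, c) = ω.1` (Xavier's colour) is not `𝒜^M`-measurable: its preimage
`ξ⁻¹({true}) = {(ω, c) | ω.1 = true}`, whose `Ω`-slice at the context `YZ` is the set
`E_X(R_X) = {true} × Bool × Bool`, does not belong to `𝒜^M`, because `E_X(R_X)` is not
`𝒜_YZ`-measurable. -/
theorem xavier_not_measurable :
    xi ⁻¹' {true} = {p : SampleSpace × Ctx | p.1.1 = true} ∧
    {ω : SampleSpace | (ω, Ctx.YZ) ∈ xi ⁻¹' {true}} = eventXRed ∧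
    ¬ MeasurableSet[alg Ctx.YZ] eventXRed ∧
    ¬ MeasurableSet[algM] (xi ⁻¹' {true}) ∧
    ¬ @Measurable (SampleSpace × Ctx) Bool algM ⊤ xi := by
  have h1 : xi ⁻¹' {true} = {p : SampleSpace × Ctx | p.1.1 = true} := by
    ext p; simp [xi]
  have h2 : {ω : SampleSpace | (ω, Ctx.YZ) ∈ xi ⁻¹' {true}} = eventXRed := by
    ext ⟨x, y, z⟩; simp [xi, eventXRed]
  have h4 : ¬ MeasurableSet[algM] (xi ⁻¹' {true}) := by
    intro h
    exact eventXRed_not_meas (h2 ▸ h Ctx.YZ)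
  exact ⟨h1, h2, eventXRed_not_meas, h4, fun h => h4 (h (by trivial))⟩
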